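/- arXiv:2505.12240 — 4 statements merged into one kernel-verified Lean document; each statement's English description precedes it below -/
import Mathlib

section
/- The map T : ℝ² → ℝ² defined by T(x) = τ(|x|²) x is of class C¹, and its Jacobian matrix is DT(x) = τ(|x|²) ( I₂ + (1/(h² + h√(h²+|x|²))) [[x1², x1 x2],[x1 x2, x2²]] ). -/
/-! By the fundamental theorem of calculus `τ' = τ g`, so `T x = τ(|x|²) • x` is `C¹` with
`DT(x) v = τ(|x|²) v + 2 τ(|x|²) g(|x|²) (x·v) x`, and `2 g(s) = 1/(h² + h√(h² + s))`. -/

open Real ContinuousLinearMap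

theorem hasDerivAt_exp_intervalIntegral {g : ℝ → ℝ} (hg : Continuous g) (a s : ℝ) :
    HasDerivAt (fun t => exp (∫ z in a..t, g z)) (exp (∫ z in a..s, g z) * g s) s :=
  (hg.integral_hasStrictDerivAt a s).hasDerivAt.exp

theorem contDiff_one_intervalIntegral {g : ℝ → ℝ} (hg : Continuous g) (a : ℝ) :
    ContDiff ℝ 1 (fun t => ∫ z in a..t, g z) := by
  rw [contDiff_one_iff_deriv, funext fun s => (hg.integral_hasStrictDerivAt a s).hasDerivAt.deriv]
  exact ⟨fun s => (hg.integral_hasStrictDerivAt a s).hasDerivAt.differentiableAt, hg⟩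

theorem hasFDerivAt_fst_sq_add_snd_sq (x : ℝ × ℝ) :
    HasFDerivAt (fun y : ℝ × ℝ => y.1 ^ 2 + y.2 ^ 2)
      ((2 * x.1) • fst ℝ ℝ ℝ + (2 * x.2) • snd ℝ ℝ ℝ) x :=
  ((hasFDerivAt_fst.pow 2).fun_add (hasFDerivAt_snd.pow 2)).congr_fderiv (by ext <;> simp)

theorem mul_sqrt_add_sq_add_sq_pos {h : ℝ} (hh : 0 < h) (s : ℝ) :
    0 < h * √(s + h ^ 2) + h ^ 2 := by
  positivity

/-- The map `T(x) = τ(|x|²) x` is `C¹` and its Jacobian at `x` is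
`τ(|x|²)(I₂ + (1/(h²+h√(h²+|x|²))) [[x₁², x₁x₂],[x₁x₂, x₂²]])`, i.e. the linear map
`v ↦ τ(|x|²)(v + (1/(h²+h√(h²+|x|²))) (x·v) x)`. -/
theorem T_contDiff_jacobian (h : ℝ) (hh : 0 < h) :
    let g : ℝ → ℝ := fun s => 1 / (2 * (h * Real.sqrt (s + h ^ 2) + h ^ 2))
    let τ : ℝ → ℝ := fun s => Real.exp (∫ z in (0:ℝ)..s, g z)
    let T : ℝ × ℝ → ℝ × ℝ := fun x =>
      (τ (x.1 ^ 2 + x.2 ^ 2) * x.1, τ (x.1 ^ 2 + x.2 ^ 2) * x.2)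
    ContDiff ℝ 1 T ∧
    ∀ x : ℝ × ℝ, ∃ L : ℝ × ℝ →L[ℝ] ℝ × ℝ,
      (∀ v : ℝ × ℝ, L v = τ (x.1 ^ 2 + x.2 ^ 2) •
        (v + (1 / (h ^ 2 + h * Real.sqrt (h ^ 2 + (x.1 ^ 2 + x.2 ^ 2)))) •
          ((x.1 * v.1 + x.2 * v.2) • x))) ∧
      HasFDerivAt T L x := by
  intro g τ T
  have hg : Continuous g := continuous_const.div (by fun_prop) fun s =>
    (mul_pos two_pos (mul_sqrt_add_sq_add_sq_pos hh s)).ne'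
  refine ⟨(contDiff_exp.comp ((contDiff_one_intervalIntegral hg 0).comp (by fun_prop))).smul
      contDiff_id,
    fun x => ⟨_, fun v => ?_, ((hasDerivAt_exp_intervalIntegral hg 0 _).comp_hasFDerivAt x
      (hasFDerivAt_fst_sq_add_snd_sq x)).smul (hasFDerivAt_id x)⟩⟩
  set q := x.1 ^ 2 + x.2 ^ 2
  have two_mul_g : 2 * g q = 1 / (h ^ 2 + h * √(h ^ 2 + q)) := by
    have := mul_sqrt_add_sq_add_sq_pos hh q
    rw [add_comm (h ^ 2) q, add_comm (h ^ 2)]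
    simp only [g]
    field_simp
  simp only [add_apply, smul_apply, id_apply, smulRight_apply, coe_fst', coe_snd',
    Function.comp_apply, smul_eq_mul, smul_add, smul_smul]
  show τ q • v + (τ q * g q * (2 * x.1) * v.1 + τ q * g q * (2 * x.2) * v.2) • x = _
  congr 2
  linear_combination (τ q * (x.1 * v.1 + x.2 * v.2)) * two_mul_g
end

section
/- Let ω : ℝ² → [0, M/ε²] be measurable with compact support and ∫ω = γ > 0, and set r_ε = ε√(γ/(πM)). Then for every x ∈ ℝ², ∫ ln|x−y|⁻¹ ω(y) dy ≤ (M/ε²)∫₀^{r_ε} 2πr ln(1/r) dr = γ ln(1/r_ε) + γ/2; in particular ∫ ln|x−y| ω(y) dy ≥ γ ln ε − C(γ, M) for a constant C depending only on γ and M. -/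
/-!
Bathtub principle: among densities `0 ≤ ω ≤ c` of fixed mass, `∫ f ω` is largest when `ω` is
`c` times the indicator of a superlevel set of `f` carrying that mass. For the kernel
`f y = log (1 / ‖x - y‖)` this set is the disc of radius `r` around `x` with `c π r² = γ`, and the
resulting bound `c ∫_{B(x, r)} log (1 / ‖x - y‖) dy` is computed in polar coordinates.
-/

open MeasureTheory Real Metric Set

theorem integral_mul_log {R : ℝ} (hR : 0 ≤ R) :
    ∫ r in (0 : ℝ)..R, r * log r = R ^ 2 / 2 * log R - R ^ 2 / 4 := by
  have hderiv : ∀ r ∈ Ioo 0 R,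
      HasDerivWithinAt (fun r => r ^ 2 / 2 * log r - r ^ 2 / 4) (r * log r) (Ioi r) r := by
    intro r hr
    have h := (((hasDerivAt_pow 2 r).div_const 2).mul (hasDerivAt_log hr.1.ne')).sub
      ((hasDerivAt_pow 2 r).div_const 4)
    refine (h.congr_deriv ?_).hasDerivWithinAt
    field_simp
    ring
  have hcont : ContinuousOn (fun r : ℝ => r ^ 2 / 2 * log r - r ^ 2 / 4) (Icc 0 R) := by
    have hform : (fun r : ℝ => r ^ 2 / 2 * log r - r ^ 2 / 4)
        = fun r => r * (r * log r) / 2 - r ^ 2 / 4 := by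
      ext r
      ring
    rw [hform]
    fun_prop
  rw [intervalIntegral.integral_eq_sub_of_hasDeriv_right_of_le hR hcont hderiv
    (continuous_mul_log.intervalIntegrable 0 R)]
  simp

theorem integral_two_pi_mul_mul_log_one_div {R : ℝ} (hR : 0 ≤ R) :
    ∫ r in (0 : ℝ)..R, 2 * π * r * log (1 / r) = π * R ^ 2 * log (1 / R) + π * R ^ 2 / 2 := by
  simp only [one_div, log_inv, mul_neg, intervalIntegral.integral_neg, mul_assoc,
    intervalIntegral.integral_const_mul, integral_mul_log hR]
  ring

theorem integral_mul_le_mul_setIntegral_of_superlevel {α : Type*} [MeasurableSpace α]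
    {μ : Measure α} {f ω : α → ℝ} {S : Set α} {c L : ℝ} (hS : MeasurableSet S) (hSμ : μ S ≠ ⊤)
    (hfω : Integrable (fun y => f y * ω y) μ) (hf : IntegrableOn f S μ) (hω : Integrable ω μ)
    (hω_nonneg : ∀ᵐ y ∂μ, 0 ≤ ω y) (hω_le : ∀ᵐ y ∂μ, ω y ≤ c)
    (hf_in : ∀ᵐ y ∂μ, y ∈ S → L ≤ f y) (hf_out : ∀ᵐ y ∂μ, y ∉ S → f y ≤ L)
    (hmass : ∫ y, ω y ∂μ = c * μ.real S) :
    ∫ y, f y * ω y ∂μ ≤ c * ∫ y in S, f y ∂μ := by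
  have h1 : Integrable (S.indicator 1) μ :=
    (integrable_indicator_iff hS).2 (integrableOn_const (C := (1 : ℝ)) hSμ)
  have hf' : Integrable (S.indicator f) μ := (integrable_indicator_iff hS).2 hf
  have hexcess : Integrable (fun y => ω y - c * S.indicator 1 y) μ := hω.sub (h1.const_mul c)
  -- `(f - L) * (ω - c * 1_S) ≤ 0` pointwise
  have hpt : ∀ᵐ y ∂μ, f y * ω y ≤ c * S.indicator f y + L * (ω y - c * S.indicator 1 y) := by
    filter_upwards [hω_nonneg, hω_le, hf_in, hf_out] with y h0 hc hin hout
    by_cases hy : y ∈ S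
    · simp only [indicator_of_mem hy, Pi.one_apply]
      nlinarith [hin hy]
    · simp only [indicator_of_notMem hy]
      nlinarith [hout hy]
  calc ∫ y, f y * ω y ∂μ
      ≤ ∫ y, c * S.indicator f y + L * (ω y - c * S.indicator 1 y) ∂μ :=
        integral_mono_ae hfω ((hf'.const_mul c).add (hexcess.const_mul L)) hpt
    _ = c * ∫ y in S, f y ∂μ + L * (∫ y, ω y ∂μ - c * μ.real S) := by
        rw [integral_add (hf'.const_mul c) (hexcess.const_mul L),
          integral_const_mul, integral_const_mul, integral_sub hω (h1.const_mul c),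
          integral_const_mul, integral_indicator hS, integral_indicator_one hS]
    _ = c * ∫ y in S, f y ∂μ := by rw [hmass]; ring

theorem MeasureTheory.LocallyIntegrable.integrable_mul_of_hasCompactSupport {X 𝕜 : Type*}
    [TopologicalSpace X] [MeasurableSpace X] [OpensMeasurableSpace X] [T2Space X] [NormedRing 𝕜]
    {μ : Measure X} {f g : X → 𝕜} {C : ℝ} (hf : LocallyIntegrable f μ)
    (hg : AEStronglyMeasurable g μ) (hg_supp : HasCompactSupport g) (hg_bdd : ∀ x, ‖g x‖ ≤ C) :
    Integrable (fun x => f x * g x) μ := by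
  have hsupp : (fun x => f x * g x) = fun x => (tsupport g).indicator f x * g x := by
    ext x
    by_cases hx : x ∈ tsupport g
    · rw [indicator_of_mem hx]
    · rw [image_eq_zero_of_notMem_tsupport hx, mul_zero, mul_zero]
  rw [hsupp]
  exact ((integrable_indicator_iff hg_supp.isCompact.measurableSet).2
    (hf.integrableOn_isCompact hg_supp)).mul_bdd hg (ae_of_all _ hg_bdd)

theorem preimage_sub_left_ball {G : Type*} [SeminormedAddCommGroup G] (x : G) (r : ℝ) :
    (fun y => x - y) ⁻¹' ball 0 r = ball x r := by
  ext y
  simp [dist_eq_norm, norm_sub_rev]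

section Translation

variable {G : Type*} [NormedAddCommGroup G] [MeasurableSpace G] [BorelSpace G]
  (μ : Measure G) [μ.IsAddLeftInvariant] [μ.IsNegInvariant]

theorem integrableOn_ball_comp_sub_left_iff {f : G → ℝ} (x : G) (r : ℝ) :
    IntegrableOn (fun y => f (x - y)) (ball x r) μ ↔ IntegrableOn f (ball 0 r) μ := by
  rw [← preimage_sub_left_ball]
  exact (Measure.measurePreserving_sub_left μ x).integrableOn_comp_preimage
    (MeasurableEquiv.subLeft x).measurableEmbedding

theorem setIntegral_ball_comp_sub_left (f : G → ℝ) (x : G) (r : ℝ) :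
    ∫ y in ball x r, f (x - y) ∂μ = ∫ z in ball 0 r, f z ∂μ := by
  rw [← preimage_sub_left_ball]
  exact (Measure.measurePreserving_sub_left μ x).setIntegral_preimage_emb
    (MeasurableEquiv.subLeft x).measurableEmbedding f _

end Translation

section LogKernel

variable {E : Type*} [NormedAddCommGroup E] [NormedSpace ℝ E] [FiniteDimensional ℝ E]
  [MeasurableSpace E] [BorelSpace E] (μ : Measure E) [μ.IsAddHaarMeasure]

theorem integrableOn_log_norm_ball [Nontrivial E] (r : ℝ) :
    IntegrableOn (fun z : E => log ‖z‖) (ball 0 r) μ := by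
  rw [integrableOn_fun_norm_addHaar μ (f := log)]
  exact (intervalIntegral.intervalIntegrable_log'.continuousOn_mul
    (continuous_pow _).continuousOn).1.mono_set Ioo_subset_Ioc_self

theorem locallyIntegrable_log_norm_sub [Nontrivial E] (x : E) :
    LocallyIntegrable (fun y => log ‖x - y‖) μ := by
  rw [locallyIntegrable_iff]
  intro K hK
  obtain ⟨R, hR⟩ := hK.isBounded.subset_ball x
  exact ((integrableOn_ball_comp_sub_left_iff μ x R).2 (integrableOn_log_norm_ball μ R)).mono_set hR

theorem integral_log_inv_norm_sub_mul_le [Nontrivial E] (x : E) {ω : E → ℝ} {c r : ℝ}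
    (hr : 0 < r) (hω_meas : AEStronglyMeasurable ω μ) (hω_supp : HasCompactSupport ω)
    (hω_nonneg : ∀ y, 0 ≤ ω y) (hω_le : ∀ y, ω y ≤ c)
    (hmass : ∫ y, ω y ∂μ = c * μ.real (ball x r)) :
    ∫ y, log (1 / ‖x - y‖) * ω y ∂μ ≤ c * ∫ y in ball x r, log (1 / ‖x - y‖) ∂μ := by
  have hlog : LocallyIntegrable (fun y => log (1 / ‖x - y‖)) μ := by
    convert (locallyIntegrable_log_norm_sub μ x).neg using 1
    ext y
    simp [log_inv]
  have hω_bdd : ∀ y, ‖ω y‖ ≤ c := fun y => by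
    rw [norm_of_nonneg (hω_nonneg y)]; exact hω_le y
  have hω_int : Integrable ω μ := by
    simpa using (locallyIntegrable_const (1 : ℝ)).integrable_mul_of_hasCompactSupport
      hω_meas hω_supp hω_bdd
  refine integral_mul_le_mul_setIntegral_of_superlevel (L := log (1 / r)) measurableSet_ball
    measure_ball_lt_top.ne (hlog.integrable_mul_of_hasCompactSupport hω_meas hω_supp hω_bdd)
    ((hlog.integrableOn_isCompact (isCompact_closedBall x r)).mono_set ball_subset_closedBall)
    hω_int (ae_of_all _ hω_nonneg) (ae_of_all _ hω_le) ?_ (ae_of_all _ fun y hy => ?_) hmass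
  · filter_upwards [compl_mem_ae_iff.2 (measure_singleton x)] with y hyx hy
    have hpos : 0 < ‖x - y‖ := norm_pos_iff.2 (sub_ne_zero.2 (Ne.symm hyx))
    have hlt : ‖x - y‖ < r := by rwa [mem_ball, dist_comm, dist_eq_norm] at hy
    exact log_le_log (one_div_pos.2 hr) (one_div_le_one_div_of_le hpos hlt.le)
  · have hle : r ≤ ‖x - y‖ := by rwa [mem_ball, dist_comm, dist_eq_norm, not_lt] at hy
    exact log_le_log (one_div_pos.2 (hr.trans_le hle)) (one_div_le_one_div_of_le hr hle)

end LogKernel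

theorem setIntegral_ball_fin_two_fun_norm (g : ℝ → ℝ) {r : ℝ} (hr : 0 ≤ r) :
    ∫ z in ball (0 : EuclideanSpace ℝ (Fin 2)) r, g ‖z‖ = ∫ s in (0 : ℝ)..r, 2 * π * s * g s := by
  have hind : (ball (0 : EuclideanSpace ℝ (Fin 2)) r).indicator (fun z => g ‖z‖)
      = fun z => (Iio r).indicator g ‖z‖ := by
    ext z
    simp [indicator]
  have hrad : (fun s : ℝ => s ^ (2 - 1) • (Iio r).indicator g s)
      = (Iio r).indicator fun s => s * g s := by
    ext s
    by_cases hs : s ∈ Iio r <;> simp [hs]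
  have hunit : (volume : Measure (EuclideanSpace ℝ (Fin 2))).real (ball 0 1) = π := by
    simp [measureReal_def, pi_nonneg]
  rw [← integral_indicator measurableSet_ball, hind, integral_fun_norm_addHaar volume,
    finrank_euclideanSpace_fin, hrad, setIntegral_indicator measurableSet_Iio, Ioi_inter_Iio,
    ← integral_Ioc_eq_integral_Ioo, ← intervalIntegral.integral_of_le hr, hunit]
  simp only [nsmul_eq_mul, smul_eq_mul, Nat.cast_ofNat, mul_assoc,
    ← intervalIntegral.integral_const_mul]

/-- Rearrangement bound on the logarithmic self-interaction: if `0 ≤ ω ≤ M/ε²`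
has compact support and mass `γ`, and `r_ε = ε√(γ/(πM))`, then for all `x`,
`∫ ln|x−y|⁻¹ ω(y) dy ≤ (M/ε²)∫₀^{r_ε} 2πr ln(1/r) dr = γ ln(1/r_ε) + γ/2`;
in particular `∫ ln|x−y| ω(y) dy ≥ γ ln ε − C` for a constant `C = C(γ, M)`. -/
theorem log_selfinteraction_bound (M γ : ℝ) (hM : 0 < M) (hγ : 0 < γ) :
    ∃ C : ℝ, ∀ ε : ℝ, 0 < ε → ε < 1 →
      ∀ ω : EuclideanSpace ℝ (Fin 2) → ℝ,
        Measurable ω → HasCompactSupport ω →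
        (∀ y, 0 ≤ ω y) → (∀ y, ω y ≤ M / ε ^ 2) →
        (∫ y, ω y) = γ →
        let rε : ℝ := ε * Real.sqrt (γ / (π * M))
        (∀ x, (∫ y, Real.log (1 / ‖x - y‖) * ω y)
            ≤ (M / ε ^ 2) * ∫ r in (0:ℝ)..rε, 2 * π * r * Real.log (1 / r)) ∧
        ((M / ε ^ 2) * (∫ r in (0:ℝ)..rε, 2 * π * r * Real.log (1 / r))
            = γ * Real.log (1 / rε) + γ / 2) ∧
        (∀ x, γ * Real.log ε - C ≤ ∫ y, Real.log ‖x - y‖ * ω y) := by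
  have hρ : 0 < √(γ / (π * M)) := by positivity
  refine ⟨γ / 2 - γ * log √(γ / (π * M)),
    fun ε hε _ ω hω_meas hω_supp hω_nonneg hω_le hmass => ?_⟩
  intro rε
  have hrε : 0 < rε := mul_pos hε hρ
  have hdisk : M / ε ^ 2 * (π * rε ^ 2) = γ := by
    rw [mul_pow, sq_sqrt (by positivity)]
    field_simp
  have hbound : ∀ x, ∫ y, log (1 / ‖x - y‖) * ω y
      ≤ M / ε ^ 2 * ∫ r in (0 : ℝ)..rε, 2 * π * r * log (1 / r) := fun x => by
    have hmass' : ∫ y, ω y = M / ε ^ 2 * volume.real (ball x rε) := by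
      rw [hmass, ← hdisk, measureReal_def, EuclideanSpace.volume_ball_fin_two, ENNReal.toReal_mul,
        ENNReal.toReal_pow, ENNReal.toReal_ofReal hrε.le, ENNReal.toReal_ofReal pi_nonneg]
      ring
    calc ∫ y, log (1 / ‖x - y‖) * ω y
        ≤ M / ε ^ 2 * ∫ y in ball x rε, log (1 / ‖x - y‖) :=
          integral_log_inv_norm_sub_mul_le volume x hrε hω_meas.aestronglyMeasurable hω_supp
            hω_nonneg hω_le hmass'
      _ = M / ε ^ 2 * ∫ r in (0 : ℝ)..rε, 2 * π * r * log (1 / r) := by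
          rw [setIntegral_ball_comp_sub_left volume (fun z => log (1 / ‖z‖)),
            setIntegral_ball_fin_two_fun_norm (fun t => log (1 / t)) hrε.le]
  have hvalue : M / ε ^ 2 * ∫ r in (0 : ℝ)..rε, 2 * π * r * log (1 / r)
      = γ * log (1 / rε) + γ / 2 := by
    rw [integral_two_pi_mul_mul_log_one_div hrε.le, ← hdisk]
    ring
  refine ⟨hbound, hvalue, fun x => ?_⟩
  have hlog_rε : log (1 / rε) = -(log ε + log √(γ / (π * M))) := by
    rw [one_div, log_inv, log_mul hε.ne' hρ.ne']
  have hneg : ∫ y, log ‖x - y‖ * ω y = -∫ y, log (1 / ‖x - y‖) * ω y := by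
    rw [← integral_neg]
    simp [log_inv]
  have h := hbound x
  rw [hvalue, hlog_rε] at h
  linarith
end

section
/- Let φ(s) = C e^{s/a} − s² with a, C > 0. If C < (2a/e)² then φ has exactly three real zeros η₁ < η₂ < η₃ satisfying η₁ < 0 < η₂ < 2a < η₃, while if C > (2a/e)² then φ has exactly one real zero η̄ < 0. -/
/-!
Dividing by `e^{s/a}`, `φ(s) = 0` becomes `g(s) = C` for `g(s) = s² e^{-s/a}`, whose derivative is
`e^{-s/a} s (2 - s/a)`. So `g` decreases from `+∞` to `0` on `(-∞, 0]`, increases from `0` to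
`g(2a) = (2a/e)²` on `[0, 2a]` and decreases back to `0` on `[2a, ∞)`. Each of these monotone
branches meets the level `C > 0` at most once, and by the intermediate value theorem exactly once
when `C` lies strictly inside its range: always on the first branch, on the other two iff
`C < (2a/e)²`.
-/

open Real Set Filter Topology

noncomputable def sqMulExpNegDiv (a s : ℝ) : ℝ := s ^ 2 * exp (-s / a)

namespace SqMulExpNegDiv

variable {a : ℝ}

theorem hasDerivAt (a s : ℝ) :
    HasDerivAt (sqMulExpNegDiv a) (exp (-s / a) * (s * (2 - s / a))) s := by
  have hexp : HasDerivAt (fun s : ℝ => exp (-s / a)) (exp (-s / a) * (-1 / a)) s :=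
    (hasDerivAt_exp _).comp s ((hasDerivAt_id s).neg.div_const a)
  exact ((hasDerivAt_pow 2 s).mul hexp).congr_deriv (by push_cast; ring)

theorem continuous (a : ℝ) : Continuous (sqMulExpNegDiv a) := by
  unfold sqMulExpNegDiv
  fun_prop

@[simp]
theorem apply_zero (a : ℝ) : sqMulExpNegDiv a 0 = 0 := by
  simp [sqMulExpNegDiv]

theorem apply_two_mul (ha : a ≠ 0) : sqMulExpNegDiv a (2 * a) = (2 * a / exp 1) ^ 2 := by
  have hexp : exp (-(2 * a) / a) = (exp 1 ^ 2)⁻¹ := by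
    rw [show -(2 * a) / a = -(1 * 2) by field_simp, exp_neg, exp_mul]
    norm_cast
  rw [sqMulExpNegDiv, hexp, div_pow, div_eq_mul_inv]

theorem strictAntiOn_Iic (ha : 0 < a) : StrictAntiOn (sqMulExpNegDiv a) (Iic 0) := by
  refine strictAntiOn_of_deriv_neg (convex_Iic 0) (continuous a).continuousOn fun x hx => ?_
  rw [interior_Iic, mem_Iio] at hx
  have hfactor : 0 < 2 - x / a := by linarith [div_neg_of_neg_of_pos hx ha]
  rw [(hasDerivAt a x).deriv]
  exact mul_neg_of_pos_of_neg (exp_pos _) (mul_neg_of_neg_of_pos hx hfactor)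

theorem strictMonoOn_Icc (ha : 0 < a) : StrictMonoOn (sqMulExpNegDiv a) (Icc 0 (2 * a)) := by
  refine strictMonoOn_of_deriv_pos (convex_Icc 0 _) (continuous a).continuousOn fun x hx => ?_
  rw [interior_Icc] at hx
  have hfactor : 0 < 2 - x / a := by rw [sub_pos, div_lt_iff₀ ha]; linarith [hx.2]
  rw [(hasDerivAt a x).deriv]
  exact mul_pos (exp_pos _) (mul_pos hx.1 hfactor)

theorem strictAntiOn_Ici (ha : 0 < a) : StrictAntiOn (sqMulExpNegDiv a) (Ici (2 * a)) := by
  refine strictAntiOn_of_deriv_neg (convex_Ici _) (continuous a).continuousOn fun x hx => ?_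
  rw [interior_Ici, mem_Ioi] at hx
  have hfactor : 2 - x / a < 0 := by rw [sub_neg, lt_div_iff₀ ha]; linarith
  rw [(hasDerivAt a x).deriv]
  exact mul_neg_of_pos_of_neg (exp_pos _) (mul_neg_of_pos_of_neg (by linarith) hfactor)

theorem le_apply_two_mul (ha : 0 < a) {s : ℝ} (hs : 0 ≤ s) :
    sqMulExpNegDiv a s ≤ sqMulExpNegDiv a (2 * a) := by
  rcases le_total s (2 * a) with hle | hge
  · exact (strictMonoOn_Icc ha).monotoneOn ⟨hs, hle⟩ ⟨by positivity, le_rfl⟩ hle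
  · exact (strictAntiOn_Ici ha).antitoneOn self_mem_Ici hge hge

theorem tendsto_atTop (ha : 0 < a) : Tendsto (sqMulExpNegDiv a) atTop (𝓝 0) := by
  have hlim := ((tendsto_pow_mul_exp_neg_atTop_nhds_zero 2).comp
    (tendsto_id.atTop_div_const ha)).const_mul (a ^ 2)
  rw [mul_zero] at hlim
  refine hlim.congr fun s => ?_
  simp only [Function.comp_apply, id, sqMulExpNegDiv, neg_div]
  field_simp

theorem tendsto_atBot (ha : 0 < a) : Tendsto (sqMulExpNegDiv a) atBot atTop := by
  refine tendsto_atTop_mono' atBot ?_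
    ((tendsto_pow_atTop two_ne_zero).comp tendsto_neg_atBot_atTop)
  filter_upwards [eventually_le_atBot 0] with s hs
  rw [Function.comp_apply, neg_sq]
  exact le_mul_of_one_le_right (sq_nonneg s) (one_le_exp (div_nonneg (neg_nonneg.2 hs) ha.le))

theorem exists_neg_apply_eq (ha : 0 < a) {C : ℝ} (hC : 0 < C) :
    ∃ η < 0, sqMulExpNegDiv a η = C := by
  have hzero : Tendsto (sqMulExpNegDiv a) (𝓝[<] 0) (𝓝 0) := by
    simpa using ((continuous a).tendsto 0).mono_left nhdsWithin_le_nhds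
  exact isPreconnected_Iio.intermediate_value_Ioi (l₁ := 𝓝[<] 0) inf_le_right
    (le_principal_iff.2 (Iio_mem_atBot 0)) (continuous a).continuousOn hzero (tendsto_atBot ha) hC

theorem exists_mem_Ioo_apply_eq (ha : 0 < a) {C : ℝ} (hC : 0 < C)
    (hCmax : C < sqMulExpNegDiv a (2 * a)) : ∃ η ∈ Ioo 0 (2 * a), sqMulExpNegDiv a η = C :=
  intermediate_value_Ioo (by positivity) (continuous a).continuousOn
    ⟨(apply_zero a).symm ▸ hC, hCmax⟩

theorem exists_gt_apply_eq (ha : 0 < a) {C : ℝ} (hC : 0 < C)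
    (hCmax : C < sqMulExpNegDiv a (2 * a)) : ∃ η > 2 * a, sqMulExpNegDiv a η = C := by
  have hleft : Tendsto (sqMulExpNegDiv a) (𝓝[>] (2 * a)) (𝓝 (sqMulExpNegDiv a (2 * a))) :=
    ((continuous a).tendsto _).mono_left nhdsWithin_le_nhds
  exact isPreconnected_Ioi.intermediate_value_Ioo (l₂ := 𝓝[>] (2 * a))
    (le_principal_iff.2 (Ioi_mem_atTop _)) inf_le_right (continuous a).continuousOn
    (tendsto_atTop ha) hleft ⟨hC, hCmax⟩

theorem setOf_apply_eq_eq_triple (ha : 0 < a) {C η₁ η₂ η₃ : ℝ} (hη₁ : η₁ ≤ 0)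
    (hη₂ : η₂ ∈ Icc 0 (2 * a)) (hη₃ : 2 * a ≤ η₃) (h₁ : sqMulExpNegDiv a η₁ = C)
    (h₂ : sqMulExpNegDiv a η₂ = C) (h₃ : sqMulExpNegDiv a η₃ = C) :
    {s | sqMulExpNegDiv a s = C} = {η₁, η₂, η₃} := by
  ext s
  refine ⟨fun hs => ?_, by rintro (rfl | rfl | rfl) <;> assumption⟩
  rw [mem_ofPred_eq] at hs
  rcases le_total s 0 with hs₀ | hs₀
  · exact Or.inl ((strictAntiOn_Iic ha).injOn hs₀ hη₁ (hs.trans h₁.symm))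
  rcases le_total s (2 * a) with hs₂ | hs₂
  · exact Or.inr (Or.inl ((strictMonoOn_Icc ha).injOn ⟨hs₀, hs₂⟩ hη₂ (hs.trans h₂.symm)))
  · exact Or.inr (Or.inr ((strictAntiOn_Ici ha).injOn hs₂ hη₃ (hs.trans h₃.symm)))

theorem setOf_apply_eq_eq_singleton (ha : 0 < a) {C η : ℝ} (hC : sqMulExpNegDiv a (2 * a) < C)
    (hη : η ≤ 0) (h : sqMulExpNegDiv a η = C) : {s | sqMulExpNegDiv a s = C} = {η} := by
  ext s
  refine ⟨fun hs => ?_, by rintro rfl; exact h⟩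
  rw [mem_ofPred_eq] at hs
  have hs₀ : s ≤ 0 := by
    by_contra! hpos
    exact (le_apply_two_mul ha hpos.le).not_gt (hs ▸ hC)
  exact (strictAntiOn_Iic ha).injOn hs₀ hη (hs.trans h.symm)

end SqMulExpNegDiv

theorem mul_exp_div_sub_sq_eq_zero_iff {a C s : ℝ} :
    C * exp (s / a) - s ^ 2 = 0 ↔ sqMulExpNegDiv a s = C := by
  rw [sqMulExpNegDiv, neg_div, exp_neg, sub_eq_zero, eq_comm, ← div_eq_mul_inv,
    div_eq_iff (exp_pos _).ne']

/-- For `φ(s) = C e^{s/a} − s²` with `a, C > 0`: if `C < (2a/e)²` then `φ` has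
exactly three zeros `η₁ < 0 < η₂ < 2a < η₃`, while if `C > (2a/e)²` then `φ` has
exactly one zero `η̄ < 0`. -/
theorem phi_zeros (a C : ℝ) (ha : 0 < a) (hC : 0 < C) :
    let φ : ℝ → ℝ := fun s => C * Real.exp (s / a) - s ^ 2
    (C < (2 * a / Real.exp 1) ^ 2 →
      ∃ η₁ η₂ η₃ : ℝ, η₁ < 0 ∧ 0 < η₂ ∧ η₂ < 2 * a ∧ 2 * a < η₃ ∧
        {s : ℝ | φ s = 0} = {η₁, η₂, η₃}) ∧
    ((2 * a / Real.exp 1) ^ 2 < C →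
      ∃ ηb : ℝ, ηb < 0 ∧ {s : ℝ | φ s = 0} = {ηb}) := by
  intro φ
  have hzeros : {s | φ s = 0} = {s | sqMulExpNegDiv a s = C} :=
    Set.ext fun _ => mul_exp_div_sub_sq_eq_zero_iff
  rw [hzeros, ← SqMulExpNegDiv.apply_two_mul ha.ne']
  obtain ⟨η₁, hη₁, h₁⟩ := SqMulExpNegDiv.exists_neg_apply_eq ha hC
  refine ⟨fun hCmax => ?_, fun hCmax => ⟨η₁, hη₁,
    SqMulExpNegDiv.setOf_apply_eq_eq_singleton ha hCmax hη₁.le h₁⟩⟩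
  obtain ⟨η₂, ⟨hη₂₀, hη₂⟩, h₂⟩ := SqMulExpNegDiv.exists_mem_Ioo_apply_eq ha hC hCmax
  obtain ⟨η₃, hη₃, h₃⟩ := SqMulExpNegDiv.exists_gt_apply_eq ha hC hCmax
  exact ⟨η₁, η₂, η₃, hη₁, hη₂₀, hη₂, hη₃, SqMulExpNegDiv.setOf_apply_eq_eq_triple ha hη₁.le
    ⟨hη₂₀.le, hη₂.le⟩ hη₃.le h₁ h₂ h₃⟩
end

section
/- As C_E → 0⁺, the period T_E = (4πC_E/((a₁+a₂)A₁)) ∫_{η₁}^{η₂} e^{x₁/a′}/√(C_E e^{x₁/a′} − x₁²) dx₁ of the closed orbit on the level set with parameter C_E satisfies T_E / C_E → 4π²/((a₁+a₂)A₁); in particular T_E → 0 as C_E → 0. -/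
open Real Filter MeasureTheory intervalIntegral Set Topology

/-!
Write `F(s) = C e^{s/a'} - s²` with roots `e₁ < 0 < e₂`, and `P(s) = (s - e₁)(e₂ - s)`.
As `e₁² < C` and `F(2√C) < 0` forces a root in `(0, 2√C]`, the interval `[e₁, e₂]` lies in
`[-√C, 2√C]`, so `e^{s/a'} = 1 + O(√C)` on it and `F'' = C e^{s/a'}/a'² - 2` lies between `-2`
and `-2k` with `k = 1 - O(C)`. The concave functions `F - kP` and `P - F` vanish at both ends,
hence `kP ≤ F ≤ P`. As `∫_{e₁}^{e₂} ds/√P = π` whatever `e₁ < e₂` are, the integral in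
`T_E/C_E` is squeezed to `π`.
-/

-- The total mass of the Chebyshev measure, computed through `x = cos θ`.
theorem integral_one_div_sqrt_one_sub_sq : ∫ x in (-1 : ℝ)..1, 1 / √(1 - x ^ 2) = π := by
  have h := Polynomial.Chebyshev.integral_measureT_eq_integral_cos (f := fun _ => (1 : ℝ))
  rw [Polynomial.Chebyshev.integral_measureT] at h
  simpa using h

theorem integral_one_div_sqrt_mul_sub {a b : ℝ} (hab : a < b) :
    ∫ s in a..b, 1 / √((s - a) * (b - s)) = π := by
  set c := (b - a) / 2
  have hc : 0 < c := by simp only [c]; linarith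
  have key := integral_comp_mul_add (a := -1) (b := 1)
    (fun s => 1 / √((s - a) * (b - s))) hc.ne' ((a + b) / 2)
  have hscale : ∀ x : ℝ, 1 / √((c * x + (a + b) / 2 - a) * (b - (c * x + (a + b) / 2)))
      = c⁻¹ * (1 / √(1 - x ^ 2)) := by
    intro x
    rw [show (c * x + (a + b) / 2 - a) * (b - (c * x + (a + b) / 2)) = c ^ 2 * (1 - x ^ 2) by
      simp only [c]; ring, sqrt_mul (sq_nonneg c), sqrt_sq hc.le]
    field_simp
  simp only [hscale, intervalIntegral.integral_const_mul, integral_one_div_sqrt_one_sub_sq,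
    smul_eq_mul] at key
  rw [show c * -1 + (a + b) / 2 = a by simp only [c]; ring,
    show c * 1 + (a + b) / 2 = b by simp only [c]; ring] at key
  exact (mul_left_cancel₀ (inv_ne_zero hc.ne') key).symm

theorem intervalIntegrable_one_div_sqrt_mul_sub {a b : ℝ} (hab : a < b) :
    IntervalIntegrable (fun s => 1 / √((s - a) * (b - s))) volume a b :=
  intervalIntegrable_of_integral_ne_zero ((integral_one_div_sqrt_mul_sub hab).symm ▸ pi_ne_zero)

theorem mul_sub_mul_sub_le_of_deriv2_le {f f' f'' : ℝ → ℝ} {a b k x : ℝ}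
    (hf : ∀ y, HasDerivAt f (f' y) y) (hf' : ∀ y, HasDerivAt f' (f'' y) y)
    (ha : f a = 0) (hb : f b = 0) (hk : ∀ y ∈ Ioo a b, f'' y ≤ -2 * k) (hx : x ∈ Icc a b) :
    k * ((x - a) * (b - x)) ≤ f x := by
  have hab : a ≤ b := hx.1.trans hx.2
  have hg (y : ℝ) : HasDerivAt (fun y => f y - k * ((y - a) * (b - y)))
      (f' y - k * (a + b - 2 * y)) y := by
    refine ((hf y).sub ((((hasDerivAt_id y).sub_const a).mul
      ((hasDerivAt_id y).const_sub b)).const_mul k)).congr_deriv ?_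
    simp only [id]; ring
  have hg' (y : ℝ) : HasDerivAt (fun y => f' y - k * (a + b - 2 * y)) (f'' y + 2 * k) y := by
    refine ((hf' y).sub ((((hasDerivAt_id y).const_mul 2).const_sub (a + b)).const_mul k))
      |>.congr_deriv ?_
    ring
  have hconc : ConcaveOn ℝ (Icc a b) (fun y => f y - k * ((y - a) * (b - y))) :=
    concaveOn_of_hasDerivWithinAt2_nonpos (convex_Icc a b)
      (HasDerivAt.continuousOn fun y _ => hg y) (fun y _ => (hg y).hasDerivWithinAt)
      (fun y _ => (hg' y).hasDerivWithinAt)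
      (fun y hy => by rw [interior_Icc] at hy; linarith [hk y hy])
  have hmin := hconc.ge_on_segment (left_mem_Icc.2 hab) (right_mem_Icc.2 hab)
    (by rwa [segment_eq_Icc hab])
  simp only [ha, hb, sub_self, mul_zero, zero_mul, min_self] at hmin
  linarith

theorem le_mul_sub_mul_sub_of_le_deriv2 {f f' f'' : ℝ → ℝ} {a b k x : ℝ}
    (hf : ∀ y, HasDerivAt f (f' y) y) (hf' : ∀ y, HasDerivAt f' (f'' y) y)
    (ha : f a = 0) (hb : f b = 0) (hk : ∀ y ∈ Ioo a b, -2 * k ≤ f'' y) (hx : x ∈ Icc a b) :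
    f x ≤ k * ((x - a) * (b - x)) := by
  have hneg := mul_sub_mul_sub_le_of_deriv2_le (f := -f) (k := -k) (fun y => (hf y).neg)
    (fun y => (hf' y).neg) (by simp [ha]) (by simp [hb])
    (fun y hy => by linarith [hk y hy]) hx
  simp only [Pi.neg_apply] at hneg
  linarith

theorem integral_div_sqrt_mem_Icc {g F : ℝ → ℝ} {a b m M k : ℝ} (hab : a < b) (hk : 0 < k)
    (hm : 0 ≤ m) (hg : Continuous g) (hF : Continuous F)
    (hgm : ∀ x ∈ Ioo a b, m ≤ g x) (hgM : ∀ x ∈ Ioo a b, g x ≤ M)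
    (hFk : ∀ x ∈ Ioo a b, k * ((x - a) * (b - x)) ≤ F x)
    (hF1 : ∀ x ∈ Ioo a b, F x ≤ (x - a) * (b - x)) :
    ∫ x in a..b, g x / √(F x) ∈ Icc (m * π) (M / √k * π) := by
  have hP := intervalIntegrable_one_div_sqrt_mul_sub hab
  have hlow : ∀ x ∈ Ioo a b, m * (1 / √((x - a) * (b - x))) ≤ g x / √(F x) := by
    intro x hx
    have hPx : 0 < (x - a) * (b - x) := mul_pos (by linarith [hx.1]) (by linarith [hx.2])
    have hFx : 0 < √(F x) := sqrt_pos.2 ((mul_pos hk hPx).trans_le (hFk x hx))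
    rw [mul_one_div]
    exact div_le_div₀ ((hm.trans (hgm x hx))) (hgm x hx) hFx (sqrt_le_sqrt (hF1 x hx))
  have hup : ∀ x ∈ Ioo a b, g x / √(F x) ≤ M / √k * (1 / √((x - a) * (b - x))) := by
    intro x hx
    have hPx : 0 < (x - a) * (b - x) := mul_pos (by linarith [hx.1]) (by linarith [hx.2])
    rw [div_mul_div_comm, mul_one, ← sqrt_mul hk.le]
    exact div_le_div₀ ((hm.trans (hgm x hx)).trans (hgM x hx)) (hgM x hx)
      (sqrt_pos.2 (mul_pos hk hPx)) (sqrt_le_sqrt (hFk x hx))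
  have hint : IntervalIntegrable (fun x => g x / √(F x)) volume a b := by
    refine (hP.const_mul (M / √k)).mono_fun
      (hg.measurable.div (continuous_sqrt.comp hF).measurable).aestronglyMeasurable ?_
    rw [uIoc_of_le hab.le, ← Measure.restrict_congr_set Ioo_ae_eq_Ioc]
    filter_upwards [self_mem_ae_restrict measurableSet_Ioo] with x hx
    have hg0 : 0 ≤ g x := hm.trans (hgm x hx)
    have hM0 : 0 ≤ M := hg0.trans (hgM x hx)
    rw [norm_of_nonneg (by positivity), norm_of_nonneg (by positivity)]
    exact hup x hx
  constructor
  · simpa only [intervalIntegral.integral_const_mul, integral_one_div_sqrt_mul_sub hab] using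
      integral_mono_on_of_le_Ioo hab.le (hP.const_mul m) hint hlow
  · simpa only [intervalIntegral.integral_const_mul, integral_one_div_sqrt_mul_sub hab] using
      integral_mono_on_of_le_Ioo hab.le hint (hP.const_mul (M / √k)) hup

section LevelSet

variable {a' C e₁ e₂ : ℝ}

theorem neg_sqrt_lt_of_root (ha' : 0 < a') (he₁ : e₁ < 0)
    (hF : C * exp (e₁ / a') - e₁ ^ 2 = 0) : -√C < e₁ := by
  refine neg_sqrt_lt_of_sq_lt ?_
  have : exp (e₁ / a') < 1 := exp_lt_one_iff.2 (div_neg_of_neg_of_pos he₁ ha')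
  nlinarith [exp_pos (e₁ / a'), sq_pos_of_neg he₁]

theorem le_of_neg_of_forall_root {b : ℝ} (hC : 0 < C) (hb : 0 ≤ b)
    (hFb : C * exp (b / a') - b ^ 2 < 0) (he₁ : e₁ < 0)
    (hroots : ∀ s, C * exp (s / a') - s ^ 2 = 0 → s = e₁ ∨ e₂ ≤ s) : e₂ ≤ b := by
  obtain ⟨r, hr, hFr⟩ := intermediate_value_Icc' hb
    (f := fun s => C * exp (s / a') - s ^ 2) (by fun_prop) ⟨hFb.le, by simpa using hC.le⟩
  rcases hroots r hFr with rfl | h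
  · linarith [hr.1]
  · exact h.trans hr.2

theorem integral_level_set_mem_Icc (ha' : 0 < a') (hC : 0 < C) (he₁ : e₁ < 0) (he₂ : 0 < e₂)
    (hF₁ : C * exp (e₁ / a') - e₁ ^ 2 = 0) (hF₂ : C * exp (e₂ / a') - e₂ ^ 2 = 0)
    (hroots : ∀ s, C * exp (s / a') - s ^ 2 = 0 → s = e₁ ∨ e₂ ≤ s)
    (hsmall : exp (2 * √C / a') < 4) (hk : 0 < 1 - C * exp (2 * √C / a') / (2 * a' ^ 2)) :
    ∫ s in e₁..e₂, exp (s / a') / √(C * exp (s / a') - s ^ 2) ∈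
      Icc (exp (-√C / a') * π)
        (exp (2 * √C / a') / √(1 - C * exp (2 * √C / a') / (2 * a' ^ 2)) * π) := by
  have he₁_gt : -√C < e₁ := neg_sqrt_lt_of_root ha' he₁ hF₁
  have he₂_le : e₂ ≤ 2 * √C := by
    refine le_of_neg_of_forall_root hC (by positivity) ?_ he₁ hroots
    rw [mul_pow, sq_sqrt hC.le]
    nlinarith
  have hF' (y : ℝ) : HasDerivAt (fun s => C * exp (s / a') - s ^ 2)
      (C * exp (y / a') / a' - 2 * y) y := by
    refine ((((hasDerivAt_id y).div_const a').exp.const_mul C).sub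
      (hasDerivAt_pow 2 y)).congr_deriv ?_
    simp only [id]; ring
  have hF'' (y : ℝ) : HasDerivAt (fun s => C * exp (s / a') / a' - 2 * s)
      (C * exp (y / a') / a' ^ 2 - 2) y := by
    refine (((((hasDerivAt_id y).div_const a').exp.const_mul C).div_const a').sub
      ((hasDerivAt_id y).const_mul 2)).congr_deriv ?_
    simp only [id]; ring
  have hexp_ge : ∀ y ∈ Ioo e₁ e₂, exp (-√C / a') ≤ exp (y / a') := fun y hy =>
    exp_le_exp.2 (div_le_div_of_nonneg_right (by linarith [hy.1]) ha'.le)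
  have hexp_le : ∀ y ∈ Ioo e₁ e₂, exp (y / a') ≤ exp (2 * √C / a') := fun y hy =>
    exp_le_exp.2 (div_le_div_of_nonneg_right (by linarith [hy.2]) ha'.le)
  have hcurv_ge (y : ℝ) : -2 * 1 ≤ C * exp (y / a') / a' ^ 2 - 2 := by
    linarith [div_nonneg (mul_nonneg hC.le (exp_pos (y / a')).le) (sq_nonneg a')]
  have hcurv_le : ∀ y ∈ Ioo e₁ e₂,
      C * exp (y / a') / a' ^ 2 - 2 ≤ -2 * (1 - C * exp (2 * √C / a') / (2 * a' ^ 2)) := by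
    intro y hy
    have hle := div_le_div_of_nonneg_right (c := a' ^ 2)
      (mul_le_mul_of_nonneg_left (hexp_le y hy) hC.le) (sq_nonneg a')
    have hrw : -2 * (1 - C * exp (2 * √C / a') / (2 * a' ^ 2))
        = C * exp (2 * √C / a') / a' ^ 2 - 2 := by
      field_simp; ring
    linarith
  refine integral_div_sqrt_mem_Icc (he₁.trans he₂) hk (exp_pos _).le (by fun_prop) (by fun_prop)
    hexp_ge hexp_le ?_ ?_
  · exact fun y hy => mul_sub_mul_sub_le_of_deriv2_le hF' hF'' hF₁ hF₂ hcurv_le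
      (Ioo_subset_Icc_self hy)
  · simpa using fun y hy => le_mul_sub_mul_sub_of_le_deriv2 hF' hF'' hF₁ hF₂
      (fun z _ => hcurv_ge z) (Ioo_subset_Icc_self hy)

end LevelSet

theorem tendsto_integral_level_set {a' δ : ℝ} (ha' : 0 < a') (hδ : 0 < δ)
    {η₁ η₂ : ℝ → ℝ}
    (hroots : ∀ C, 0 < C → C < δ → η₁ C < 0 ∧ 0 < η₂ C ∧
      C * exp (η₁ C / a') - η₁ C ^ 2 = 0 ∧ C * exp (η₂ C / a') - η₂ C ^ 2 = 0 ∧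
      ∀ s, C * exp (s / a') - s ^ 2 = 0 → s = η₁ C ∨ η₂ C ≤ s) :
    Tendsto (fun C => ∫ s in (η₁ C)..(η₂ C), exp (s / a') / √(C * exp (s / a') - s ^ 2))
      (𝓝[>] 0) (𝓝 π) := by
  have hlo : Tendsto (fun C => exp (-√C / a') * π) (𝓝[>] 0) (𝓝 π) := by
    have : ContinuousAt (fun C => exp (-√C / a') * π) 0 := by fun_prop
    simpa using this.tendsto.mono_left nhdsWithin_le_nhds
  have hhi : Tendsto
      (fun C => exp (2 * √C / a') / √(1 - C * exp (2 * √C / a') / (2 * a' ^ 2)) * π)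
      (𝓝[>] 0) (𝓝 π) := by
    have : ContinuousAt
        (fun C => exp (2 * √C / a') / √(1 - C * exp (2 * √C / a') / (2 * a' ^ 2)) * π) 0 := by
      fun_prop (disch := simp)
    simpa using this.tendsto.mono_left nhdsWithin_le_nhds
  have hsmall : ∀ᶠ C in 𝓝[>] 0, exp (2 * √C / a') < 4 := by
    have : ContinuousAt (fun C => exp (2 * √C / a')) 0 := by fun_prop
    exact (this.tendsto.mono_left nhdsWithin_le_nhds).eventually_lt_const (by norm_num)
  have hk : ∀ᶠ C in 𝓝[>] 0, 0 < 1 - C * exp (2 * √C / a') / (2 * a' ^ 2) := by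
    have : ContinuousAt (fun C => 1 - C * exp (2 * √C / a') / (2 * a' ^ 2)) 0 := by fun_prop
    exact (this.tendsto.mono_left nhdsWithin_le_nhds).eventually_const_lt (by simp)
  have hδ' : ∀ᶠ C in 𝓝[>] 0, C ∈ Ioo 0 δ := Ioo_mem_nhdsGT hδ
  have hbounds := (hδ'.and (hsmall.and hk)).mono fun C ⟨hC, hsmallC, hkC⟩ =>
    let ⟨h₁, h₂, hF₁, hF₂, hrootsC⟩ := hroots C hC.1 hC.2
    integral_level_set_mem_Icc ha' hC.1 h₁ h₂ hF₁ hF₂ hrootsC hsmallC hkC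
  exact tendsto_of_tendsto_of_tendsto_of_le_of_le' hlo hhi (hbounds.mono fun _ h => h.1)
    (hbounds.mono fun _ h => h.2)

theorem period_limit_general (a' A₁ a₁ a₂ δ : ℝ) (ha' : 0 < a')
    (hδ : 0 < δ) (η₁ η₂ : ℝ → ℝ)
    (hroots : ∀ C : ℝ, 0 < C → C < δ →
      η₁ C < 0 ∧ 0 < η₂ C ∧
      C * Real.exp (η₁ C / a') - (η₁ C) ^ 2 = 0 ∧
      C * Real.exp (η₂ C / a') - (η₂ C) ^ 2 = 0 ∧
      (∀ s : ℝ, C * Real.exp (s / a') - s ^ 2 = 0 → η₁ C ≤ s) ∧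
      (∀ s : ℝ, C * Real.exp (s / a') - s ^ 2 = 0 → s = η₁ C ∨ η₂ C ≤ s)) :
    let T : ℝ → ℝ := fun C => (4 * π * C / ((a₁ + a₂) * A₁)) *
      ∫ s in (η₁ C)..(η₂ C),
        Real.exp (s / a') / Real.sqrt (C * Real.exp (s / a') - s ^ 2)
    Tendsto (fun C => T C / C) (nhdsWithin 0 (Set.Ioi 0))
      (nhds (4 * π ^ 2 / ((a₁ + a₂) * A₁))) ∧
    Tendsto T (nhdsWithin 0 (Set.Ioi 0)) (nhds 0) := by
  intro T
  have hI := tendsto_integral_level_set ha' hδ fun C hC hCδ =>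
    let ⟨h₁, h₂, hF₁, hF₂, _, hroots⟩ := hroots C hC hCδ
    ⟨h₁, h₂, hF₁, hF₂, hroots⟩
  have hratio : Tendsto (fun C => T C / C) (𝓝[>] 0) (𝓝 (4 * π ^ 2 / ((a₁ + a₂) * A₁))) := by
    rw [show 4 * π ^ 2 / ((a₁ + a₂) * A₁) = 4 * π / ((a₁ + a₂) * A₁) * π by ring]
    refine (hI.const_mul _).congr' ?_
    filter_upwards [self_mem_nhdsWithin] with C (hC : 0 < C)
    rw [eq_div_iff hC.ne']
    ring
  refine ⟨hratio, ?_⟩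
  have hprod := (tendsto_nhdsWithin_of_tendsto_nhds tendsto_id).mul hratio
  rw [zero_mul] at hprod
  refine hprod.congr' ?_
  filter_upwards [self_mem_nhdsWithin] with C (hC : 0 < C)
  exact mul_div_cancel₀ _ hC.ne'

/-- As `C_E → 0⁺`, the period
`T_E = (4πC_E/((a₁+a₂)A₁)) ∫_{η₁}^{η₂} e^{s/a′}/√(C_E e^{s/a′} − s²) ds`
of the closed orbit satisfies `T_E/C_E → 4π²/((a₁+a₂)A₁)`; in particular
`T_E → 0` as `C_E → 0`. -/
theorem period_limit (a' A₁ a₁ a₂ δ : ℝ) (ha' : 0 < a') (hA : 0 < A₁)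
    (hsum : 0 < a₁ + a₂) (hδ : 0 < δ) (η₁ η₂ : ℝ → ℝ)
    (hroots : ∀ C : ℝ, 0 < C → C < δ →
      η₁ C < 0 ∧ 0 < η₂ C ∧
      C * Real.exp (η₁ C / a') - (η₁ C) ^ 2 = 0 ∧
      C * Real.exp (η₂ C / a') - (η₂ C) ^ 2 = 0 ∧
      (∀ s : ℝ, C * Real.exp (s / a') - s ^ 2 = 0 → η₁ C ≤ s) ∧
      (∀ s : ℝ, C * Real.exp (s / a') - s ^ 2 = 0 → s = η₁ C ∨ η₂ C ≤ s)) :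
    let T : ℝ → ℝ := fun C => (4 * π * C / ((a₁ + a₂) * A₁)) *
      ∫ s in (η₁ C)..(η₂ C),
        Real.exp (s / a') / Real.sqrt (C * Real.exp (s / a') - s ^ 2)
    Tendsto (fun C => T C / C) (nhdsWithin 0 (Set.Ioi 0))
      (nhds (4 * π ^ 2 / ((a₁ + a₂) * A₁))) ∧
    Tendsto T (nhdsWithin 0 (Set.Ioi 0)) (nhds 0) :=
  period_limit_general a' A₁ a₁ a₂ δ ha' hδ η₁ η₂ hroots
end
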